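/- arXiv:0801.3142 — 3 statements merged into one kernel-verified Lean document; each statement's English description precedes it below -/
import Mathlib

section
/- Let V be a real Hilbert space, A : V × V → ℝ a bounded (constant M) and coercive (constant m > 0) bilinear form, and B : V → V a map that is monotone, i.e. ⟨B(u) − B(v), u − v⟩ ≥ 0 for all u,v ∈ V. Suppose u ∈ V satisfies A(u,v) + ⟨B(u),v⟩ = F(v) for all v ∈ V and u_h ∈ V_h ⊆ V satisfies A(u_h,v) + ⟨B(u_h),v⟩ = F(v) for all v ∈ V_h, where F is a bounded linear functional and V_h is a closed subspace. Assume further the weak boundedness condition: ⟨B(u) − B(u_h), u − v⟩ ≤ K‖u − u_h‖‖u − v‖ for all v ∈ V_h, for some constant K > 0. Then ‖u − u_h‖ ≤ ((M + K)/m) · inf_{v ∈ V_h} ‖u − v‖. -/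
/-!
Write `e = u - u_h`. Subtracting the two variational equations gives the Galerkin orthogonality
`A(e, w) = -⟨B u - B u_h, w⟩` on `V_h`. For `v ∈ V_h` split `e = (u - v) + (v - u_h)` in the
second slot of `A(e, e)`: the first piece is bounded by continuity, and by orthogonality the second
equals `⟨B u - B u_h, u - v⟩ - ⟨B u - B u_h, e⟩`, where monotonicity drops the last term and the
weak boundedness condition bounds the first. Coercivity then yields
`m ‖e‖² ≤ (M + K) ‖e‖ ‖u - v‖` for every `v ∈ V_h`; divide by `‖e‖` and take the infimum.
-/

open scoped RealInnerProductSpace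

section Galerkin

variable {V : Type*} [NormedAddCommGroup V] [InnerProductSpace ℝ V]
  (A : V →ₗ[ℝ] V →ₗ[ℝ] ℝ) (B : V → V) {Vh : Submodule ℝ V} {u uh : V}

theorem galerkin_orthogonality_semilinear (F : V → ℝ) (hu : ∀ v : V, A u v + ⟪B u, v⟫ = F v)
    (huh : ∀ v ∈ Vh, A uh v + ⟪B uh, v⟫ = F v) :
    ∀ w ∈ Vh, A (u - uh) w = -⟪B u - B uh, w⟫ := by
  intro w hw
  have hu_w := hu w
  have huh_w := huh w hw
  rw [map_sub, LinearMap.sub_apply, inner_sub_left]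
  linarith

theorem mul_norm_sq_le_of_galerkin_orthogonal {M m K : ℝ}
    (hbound : ∀ u v : V, |A u v| ≤ M * ‖u‖ * ‖v‖) (hcoer : ∀ u : V, m * ‖u‖ ^ 2 ≤ A u u)
    (hmono : 0 ≤ ⟪B u - B uh, u - uh⟫) (huh : uh ∈ Vh)
    (horth : ∀ w ∈ Vh, A (u - uh) w = -⟪B u - B uh, w⟫)
    {v : V} (hv : v ∈ Vh) (hweak : ⟪B u - B uh, u - v⟫ ≤ K * ‖u - uh‖ * ‖u - v‖) :
    m * ‖u - uh‖ ^ 2 ≤ (M + K) * ‖u - uh‖ * ‖u - v‖ := by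
  have hsplit : A (u - uh) (u - uh) = A (u - uh) (u - v) + A (u - uh) (v - uh) := by
    rw [← map_add, sub_add_sub_cancel]
  rw [horth _ (Vh.sub_mem hv huh)] at hsplit
  have hnonlinear : ⟪B u - B uh, v - uh⟫ = ⟪B u - B uh, u - uh⟫ - ⟪B u - B uh, u - v⟫ := by
    rw [← inner_sub_right, sub_sub_sub_cancel_left]
  have hlinear : A (u - uh) (u - v) ≤ M * ‖u - uh‖ * ‖u - v‖ :=
    (le_abs_self _).trans (hbound _ _)
  have hcoer_e := hcoer (u - uh)
  linarith

end Galerkin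

theorem le_div_mul_iInf_of_mul_sq_le {ι : Type*} {f : ι → ℝ} {a C m : ℝ} (hm : 0 < m)
    (hf : ∀ i, 0 ≤ f i) (i₀ : ι) (ha : f i₀ = a) (h : ∀ i, m * a ^ 2 ≤ C * a * f i) :
    a ≤ C / m * ⨅ i, f i := by
  have : Nonempty ι := ⟨i₀⟩
  have hbdd : BddBelow (Set.range f) := ⟨0, Set.forall_mem_range.2 hf⟩
  rcases (hf i₀).eq_or_lt with ha0 | ha_pos
  · have hinf : ⨅ i, f i = 0 := le_antisymm (ha0 ▸ ciInf_le hbdd i₀) (le_ciInf hf)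
    rw [hinf, mul_zero, ← ha, ← ha0]
  rw [ha] at ha_pos
  -- no sign condition on `C` is needed: at `i₀` the hypothesis forces `m ≤ C`
  have hlin : ∀ i, m * a ≤ C * f i := fun i =>
    le_of_mul_le_mul_right (by nlinarith [h i]) ha_pos
  have hCm : m ≤ C := le_of_mul_le_mul_right (ha ▸ hlin i₀) ha_pos
  have hCm_nonneg : 0 ≤ C / m := div_nonneg (hm.le.trans hCm) hm.le
  rw [Real.mul_iInf_of_nonneg hCm_nonneg]
  refine le_ciInf fun i => ?_
  rw [div_mul_eq_mul_div, le_div_iff₀ hm, mul_comm]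
  exact hlin i

theorem galerkin_quasi_optimal_monotone_general
    {V : Type*} [NormedAddCommGroup V] [InnerProductSpace ℝ V]
    (A : V →ₗ[ℝ] V →ₗ[ℝ] ℝ) (M m K : ℝ) (hm : 0 < m)
    (hbound : ∀ u v : V, |A u v| ≤ M * ‖u‖ * ‖v‖)
    (hcoer : ∀ u : V, m * ‖u‖ ^ 2 ≤ A u u)
    (B : V → V)
    (hmono : ∀ u v : V, 0 ≤ inner (𝕜 := ℝ) (B u - B v) (u - v))
    (F : V →L[ℝ] ℝ)
    (Vh : Submodule ℝ V)
    (u : V) (hu : ∀ v : V, A u v + inner (𝕜 := ℝ) (B u) v = F v)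
    (uh : V) (huh : uh ∈ Vh)
    (huh2 : ∀ v ∈ Vh, A uh v + inner (𝕜 := ℝ) (B uh) v = F v)
    (hweak : ∀ v ∈ Vh,
      inner (𝕜 := ℝ) (B u - B uh) (u - v) ≤ K * ‖u - uh‖ * ‖u - v‖) :
    ‖u - uh‖ ≤ ((M + K) / m) * ⨅ v : Vh, ‖u - (v : V)‖ := by
  have horth := galerkin_orthogonality_semilinear A B F hu huh2
  exact le_div_mul_iInf_of_mul_sq_le hm (fun _ => norm_nonneg _) ⟨uh, huh⟩ rfl fun v =>
    mul_norm_sq_le_of_galerkin_orthogonal A B hbound hcoer (hmono u uh) huh horth v.2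
      (hweak v v.2)

/-- Quasi-optimal a priori error estimate for a Galerkin approximation of a
semilinear problem with a monotone nonlinearity `B`. -/
theorem galerkin_quasi_optimal_monotone
    {V : Type*} [NormedAddCommGroup V] [InnerProductSpace ℝ V] [CompleteSpace V]
    (A : V →ₗ[ℝ] V →ₗ[ℝ] ℝ) (M m K : ℝ) (hm : 0 < m) (hK : 0 < K)
    (hbound : ∀ u v : V, |A u v| ≤ M * ‖u‖ * ‖v‖)
    (hcoer : ∀ u : V, m * ‖u‖ ^ 2 ≤ A u u)
    (B : V → V)
    (hmono : ∀ u v : V, 0 ≤ inner (𝕜 := ℝ) (B u - B v) (u - v))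
    (F : V →L[ℝ] ℝ)
    (Vh : Submodule ℝ V) (hVh : IsClosed (Vh : Set V))
    (u : V) (hu : ∀ v : V, A u v + inner (𝕜 := ℝ) (B u) v = F v)
    (uh : V) (huh : uh ∈ Vh)
    (huh2 : ∀ v ∈ Vh, A uh v + inner (𝕜 := ℝ) (B uh) v = F v)
    (hweak : ∀ v ∈ Vh,
      inner (𝕜 := ℝ) (B u - B uh) (u - v) ≤ K * ‖u - uh‖ * ‖u - v‖) :
    ‖u - uh‖ ≤ ((M + K) / m) * ⨅ v : Vh, ‖u - (v : V)‖ :=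
  galerkin_quasi_optimal_monotone_general A M m K hm hbound hcoer B hmono F Vh u hu uh huh huh2
    hweak
end

section
/- Let V and H be real Hilbert spaces with V continuously embedded in H. Let A : V × V → ℝ be bounded with constant M and satisfy the Gårding inequality m‖u‖_V² ≤ K‖u‖_H² + A(u,u) with m > 0, K ≥ 0. Suppose u ∈ V and u_h ∈ V_h ⊆ V satisfy the Galerkin orthogonality A(u − u_h, v) = 0 for all v in the closed subspace V_h, and suppose the error satisfies ‖u − u_h‖_H ≤ a‖u − u_h‖_V with K·a² < m/2. Then ‖u − u_h‖_V ≤ (2M/m) · inf_{v ∈ V_h} ‖u − v‖_V. -/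
/-!
Write `e = u - uₕ`. The smallness of `a` lets the Gårding inequality absorb its `H`-term, so `A`
is coercive with constant `m / 2` on the error alone. Galerkin orthogonality gives
`A e e = A e (u - v)` for every `v ∈ Vₕ`, and boundedness turns this into
`(m / 2) ‖e‖² ≤ M ‖e‖ ‖u - v‖`, which is Céa's argument with `m / 2` in place of the coercivity
constant.
-/

section Galerkin

variable {V : Type*} [SeminormedAddCommGroup V] [Module ℝ V]

theorem apply_sub_eq_apply_self_of_galerkin (A : V →ₗ[ℝ] V →ₗ[ℝ] ℝ) {Vh : Submodule ℝ V}
    {u uh v : V} (huh : uh ∈ Vh) (hv : v ∈ Vh) (horth : ∀ w ∈ Vh, A (u - uh) w = 0) :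
    A (u - uh) (u - v) = A (u - uh) (u - uh) := by
  rw [← sub_add_sub_cancel u uh v, map_add, horth _ (Vh.sub_mem huh hv), add_zero]

/-- Céa's lemma, with coercivity required only on the Galerkin error. -/
theorem norm_sub_le_div_mul_iInf_of_galerkin (A : V →ₗ[ℝ] V →ₗ[ℝ] ℝ) {M c : ℝ} (hc : 0 < c)
    (hbound : ∀ u v : V, |A u v| ≤ M * ‖u‖ * ‖v‖) (Vh : Submodule ℝ V) {u uh : V}
    (huh : uh ∈ Vh) (horth : ∀ v ∈ Vh, A (u - uh) v = 0)
    (hcoer : c * ‖u - uh‖ ^ 2 ≤ A (u - uh) (u - uh)) :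
    ‖u - uh‖ ≤ M / c * ⨅ v : Vh, ‖u - (v : V)‖ := by
  set e := u - uh
  have hbdd : BddBelow (Set.range fun v : Vh => ‖u - (v : V)‖) :=
    ⟨0, Set.forall_mem_range.2 fun _ => norm_nonneg _⟩
  have hcont : ∀ v ∈ Vh, c * ‖e‖ ^ 2 ≤ M * ‖e‖ * ‖u - v‖ := fun v hv =>
    calc c * ‖e‖ ^ 2 ≤ A e e := hcoer
      _ = A e (u - v) := (apply_sub_eq_apply_self_of_galerkin A huh hv horth).symm
      _ ≤ M * ‖e‖ * ‖u - v‖ := (le_abs_self _).trans (hbound _ _)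
  rcases (norm_nonneg e).eq_or_lt with he | he
  · have hinf : ⨅ v : Vh, ‖u - (v : V)‖ = 0 :=
      le_antisymm ((ciInf_le hbdd ⟨uh, huh⟩).trans_eq he.symm)
        (Real.iInf_nonneg fun _ => norm_nonneg _)
    rw [← he, hinf, mul_zero]
  have hquasi : ∀ v ∈ Vh, ‖e‖ ≤ M / c * ‖u - v‖ := by
    intro v hv
    rw [div_mul_eq_mul_div, le_div_iff₀ hc]
    refine le_of_mul_le_mul_right ?_ he
    linarith [hcont v hv]
  have hMc : 0 ≤ M / c := by
    have := hquasi uh huh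
    nlinarith
  rw [Real.mul_iInf_of_nonneg hMc]
  exact le_ciInf fun v => hquasi v v.2

end Galerkin

theorem schatz_quasi_optimal_garding_general
    {V H : Type*} [NormedAddCommGroup V] [InnerProductSpace ℝ V]
    [NormedAddCommGroup H] [InnerProductSpace ℝ H]
    (ι : V →L[ℝ] H)
    (A : V →ₗ[ℝ] V →ₗ[ℝ] ℝ) (M m K : ℝ) (hm : 0 < m) (hKnn : 0 ≤ K)
    (hbound : ∀ u v : V, |A u v| ≤ M * ‖u‖ * ‖v‖)
    (hgarding : ∀ u : V, m * ‖u‖ ^ 2 ≤ K * ‖ι u‖ ^ 2 + A u u)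
    (Vh : Submodule ℝ V)
    (u uh : V) (huh : uh ∈ Vh)
    (horth : ∀ v ∈ Vh, A (u - uh) v = 0)
    (a : ℝ) (hdual : ‖ι (u - uh)‖ ≤ a * ‖u - uh‖)
    (ha : K * a ^ 2 < m / 2) :
    ‖u - uh‖ ≤ (2 * M / m) * ⨅ v : Vh, ‖u - (v : V)‖ := by
  have hdual_sq : ‖ι (u - uh)‖ ^ 2 ≤ a ^ 2 * ‖u - uh‖ ^ 2 := by
    rw [← mul_pow]
    exact pow_le_pow_left₀ (norm_nonneg _) hdual 2
  have hcoer : m / 2 * ‖u - uh‖ ^ 2 ≤ A (u - uh) (u - uh) := by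
    nlinarith [hgarding (u - uh), mul_le_mul_of_nonneg_left hdual_sq hKnn,
      mul_le_mul_of_nonneg_right ha.le (sq_nonneg ‖u - uh‖)]
  calc ‖u - uh‖ ≤ M / (m / 2) * ⨅ v : Vh, ‖u - (v : V)‖ :=
        norm_sub_le_div_mul_iInf_of_galerkin A (half_pos hm) hbound Vh huh horth hcoer
    _ = 2 * M / m * ⨅ v : Vh, ‖u - (v : V)‖ := by rw [div_div_eq_mul_div, mul_comm M]

/-- Schatz-type quasi-optimal error estimate under a Gårding inequality. -/
theorem schatz_quasi_optimal_garding
    {V H : Type*} [NormedAddCommGroup V] [InnerProductSpace ℝ V] [CompleteSpace V]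
    [NormedAddCommGroup H] [InnerProductSpace ℝ H] [CompleteSpace H]
    (ι : V →L[ℝ] H) (hι : Function.Injective ι)
    (A : V →ₗ[ℝ] V →ₗ[ℝ] ℝ) (M m K : ℝ) (hm : 0 < m) (hKnn : 0 ≤ K)
    (hbound : ∀ u v : V, |A u v| ≤ M * ‖u‖ * ‖v‖)
    (hgarding : ∀ u : V, m * ‖u‖ ^ 2 ≤ K * ‖ι u‖ ^ 2 + A u u)
    (Vh : Submodule ℝ V) (hVh : IsClosed (Vh : Set V))
    (u uh : V) (huh : uh ∈ Vh)
    (horth : ∀ v ∈ Vh, A (u - uh) v = 0)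
    (a : ℝ) (hdual : ‖ι (u - uh)‖ ≤ a * ‖u - uh‖)
    (ha : K * a ^ 2 < m / 2) :
    ‖u - uh‖ ≤ (2 * M / m) * ⨅ v : Vh, ‖u - (v : V)‖ :=
  schatz_quasi_optimal_garding_general ι A M m K hm hKnn hbound hgarding Vh u uh huh horth a hdual
    ha
end

section
/- Let the regular tetrahedron aspect-ratio measure be α(s) = R/(3r), where R and r are the radii of the circumscribed and inscribed spheres of a nondegenerate tetrahedron s ⊂ ℝ³. Then α(s) ≥ 1 for every tetrahedron, with equality if and only if s is regular. -/
/-!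
Write `hᵢ` for the heights of an `n`-simplex and `dᵢ(x)` for the signed distance of `x` from the
face opposite vertex `i`, positive on the side of that vertex. Since `dᵢ` is affine with
`dᵢ(pⱼ) = hᵢ δᵢⱼ`, every point `x` of the span has barycentric coordinates `dᵢ(x) / hᵢ`, so
`∑ᵢ dᵢ(x) / hᵢ = 1`. At the incenter all `dᵢ` equal `r`, whence `∑ᵢ 1 / hᵢ = 1 / r`. For the
circumcenter `O`, `hᵢ - dᵢ(O)` is the component of `pᵢ - O` along the unit normal of face `i`,
so it is at most `‖pᵢ - O‖ = R`; summing `(hᵢ - dᵢ(O)) / hᵢ` gives `n ≤ R / r`. Equality forces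
each `pᵢ - O` to be normal to the face opposite `pᵢ`, i.e. `O` to lie on every altitude, which
happens exactly when each vertex is equidistant from the other vertices, i.e. when all edges are
equal.
-/

open EuclideanGeometry AffineSubspace

lemma forall_dist_eq_iff_forall_dist_eq_of_ne {ι α : Type*} [PseudoMetricSpace α] (p : ι → α) :
    (∀ i j k l, i ≠ j → k ≠ l → dist (p i) (p j) = dist (p k) (p l)) ↔
      ∀ i j k, j ≠ i → k ≠ i → dist (p j) (p i) = dist (p k) (p i) := by
  refine ⟨fun h i j k hj hk ↦ h j i k i hj hk, fun h i j k l hij hkl ↦ ?_⟩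
  rcases eq_or_ne i k with rfl | hik
  · rw [dist_comm, h i j l hij.symm hkl.symm, dist_comm]
  · calc dist (p i) (p j) = dist (p k) (p i) := by rw [dist_comm, h i j k hij.symm hik.symm]
      _ = dist (p k) (p l) := by rw [dist_comm, h k i l hik hkl.symm, dist_comm]

lemma EuclideanGeometry.inner_vsub_vsub_eq_zero_iff_dist_eq {V P : Type*}
    [NormedAddCommGroup V] [InnerProductSpace ℝ V] [MetricSpace P] [NormedAddTorsor V P]
    {c p p₁ p₂ : P} (hc : dist p₁ c = dist p₂ c) :
    inner ℝ (c -ᵥ p) (p₁ -ᵥ p₂) = 0 ↔ dist p₁ p = dist p₂ p := by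
  rw [← inner_neg_neg, neg_vsub_eq_vsub_rev, neg_vsub_eq_vsub_rev, ← mem_perpBisector_iff_dist_eq',
    ← vsub_right_mem_direction_iff_mem (mem_perpBisector_iff_dist_eq'.2 hc),
    direction_perpBisector, Submodule.mem_orthogonal_singleton_iff_inner_left]

namespace Affine.Simplex

section EuclideanAffineSpace

variable {V P : Type*} [NormedAddCommGroup V] [InnerProductSpace ℝ V] [MetricSpace P]
  [NormedAddTorsor V P] {n : ℕ} (s : Simplex ℝ P n)

lemma circumcenter_mem_altitude_iff (i : Fin (n + 1)) :
    s.circumcenter ∈ s.altitude i ↔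
      ∀ j k, j ≠ i → k ≠ i → dist (s.points j) (s.points i) = dist (s.points k) (s.points i) := by
  rw [altitude, mem_inf_iff, mem_mk', and_iff_left s.circumcenter_mem_affineSpan,
    direction_affineSpan, vectorSpan_def, ← Submodule.span_singleton_le_iff_mem,
    ← Submodule.isOrtho_iff_le, Submodule.isOrtho_span]
  simp only [Set.mem_singleton_iff, forall_eq, Set.mem_vsub, forall_exists_index, and_imp,
    Set.forall_mem_image]
  have hO (j k : Fin (n + 1)) :
      dist (s.points j) s.circumcenter = dist (s.points k) s.circumcenter :=
    (s.dist_circumcenter_eq_circumradius j).trans (s.dist_circumcenter_eq_circumradius k).symm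
  constructor
  · intro h j k hj hk
    exact (inner_vsub_vsub_eq_zero_iff_dist_eq (hO j k)).1 (h hj hk rfl)
  · rintro h _ j hj k hk rfl
    exact (inner_vsub_vsub_eq_zero_iff_dist_eq (hO j k)).2 (h j k hj hk)

variable [NeZero n]

lemma signedInfDist_affineCombination_eq_mul_height (i : Fin (n + 1)) {w : Fin (n + 1) → ℝ}
    (hw : ∑ j, w j = 1) :
    s.signedInfDist i (Finset.univ.affineCombination ℝ s.points w) = w i * s.height i := by
  rw [signedInfDist_affineCombination _ _ hw, height, altitudeFoot, dist_eq_norm_vsub]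

lemma sum_signedInfDist_div_height {x : P} (hx : x ∈ affineSpan ℝ (Set.range s.points)) :
    ∑ i, s.signedInfDist i x / s.height i = 1 := by
  obtain ⟨w, hw, rfl⟩ := eq_affineCombination_of_mem_affineSpan_of_fintype hx
  simp_rw [signedInfDist_affineCombination_eq_mul_height _ _ hw,
    mul_div_cancel_right₀ _ (s.height_pos _).ne', hw]

lemma sum_height_sub_signedInfDist_div_height {x : P}
    (hx : x ∈ affineSpan ℝ (Set.range s.points)) :
    ∑ i, (s.height i - s.signedInfDist i x) / s.height i = n := by
  simp_rw [sub_div, Finset.sum_sub_distrib, s.sum_signedInfDist_div_height hx,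
    div_self (s.height_pos _).ne']
  simp

lemma inradius_eq_inv_sum_inv_height : s.inradius = (∑ i, (s.height i)⁻¹)⁻¹ := by
  rw [inradius_eq_abs_inv_sum, abs_of_pos (inv_pos.2 s.sum_excenterWeightsUnnorm_empty_pos)]
  simp

lemma signedInfDist_eq_signedDist (i : Fin (n + 1)) :
    s.signedInfDist i = signedDist (s.points i -ᵥ s.altitudeFoot i) (s.altitudeFoot i) := by
  rw [signedInfDist, signedInfDist_eq_signedDist_of_mem
    (s.altitudeFoot_mem_affineSpan_image_compl i)]
  simp_rw [altitudeFoot, orthogonalProjectionSpan, range_faceOpposite_points]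

lemma height_sub_signedInfDist (i : Fin (n + 1)) (x : P) :
    s.height i - s.signedInfDist i x =
      signedDist (s.points i -ᵥ s.altitudeFoot i) x (s.points i) := by
  rw [height, dist_comm, ← signedDist_vsub_self, signedInfDist_eq_signedDist,
    signedDist_triangle_left]

lemma height_sub_signedInfDist_circumcenter_le_circumradius (i : Fin (n + 1)) :
    s.height i - s.signedInfDist i s.circumcenter ≤ s.circumradius := by
  rw [height_sub_signedInfDist, ← s.dist_circumcenter_eq_circumradius' i]
  exact signedDist_le_dist _ _ _

lemma signedInfDist_circumcenter_le_circumradius (i : Fin (n + 1)) :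
    s.signedInfDist i s.circumcenter ≤ s.circumradius := by
  obtain ⟨j, hj⟩ := exists_ne i
  rw [signedInfDist, signedInfDist_eq_signedDist_of_mem (s.mem_affineSpan_image_iff.2 hj),
    ← s.dist_circumcenter_eq_circumradius j]
  exact signedDist_le_dist _ _ _

lemma height_sub_signedInfDist_circumcenter_eq_circumradius_iff (i : Fin (n + 1)) :
    s.height i - s.signedInfDist i s.circumcenter = s.circumradius ↔
      s.circumcenter ∈ s.altitude i := by
  have hdir : (s.altitude i).direction = ℝ ∙ (s.points i -ᵥ s.altitudeFoot i) := by
    rw [← affineSpan_pair_altitudeFoot_eq_altitude, direction_affineSpan, vectorSpan_pair_rev]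
  rw [← vsub_left_mem_direction_iff_mem (s.mem_altitude i), hdir, height_sub_signedInfDist,
    ← s.dist_circumcenter_eq_circumradius' i]
  constructor
  · intro h
    obtain ⟨a, ha⟩ :=
      Submodule.mem_span_singleton.1 ((signedDist_eq_dist_iff_vsub_mem_span _ _ _).1 h)
    exact Submodule.mem_span_singleton.2 ⟨a, ha⟩
  · intro h
    -- On the altitude the signed distance is `±R`; it is not `-R`, since `hᵢ > 0` and
    -- `dᵢ(O) ≤ R`, `O` being at distance `R` from each vertex of the face.
    have hlt : -dist s.circumcenter (s.points i) <
        signedDist (s.points i -ᵥ s.altitudeFoot i) s.circumcenter (s.points i) := by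
      rw [← height_sub_signedInfDist, s.dist_circumcenter_eq_circumradius' i]
      linarith [s.height_pos i, s.signedInfDist_circumcenter_le_circumradius i]
    exact ((abs_eq dist_nonneg).1
      ((abs_signedDist_eq_dist_iff_vsub_mem_span _ _ _).2 h)).resolve_right hlt.ne'

lemma sum_circumradius_sub_div_height :
    ∑ i, (s.circumradius - (s.height i - s.signedInfDist i s.circumcenter)) / s.height i =
      s.circumradius / s.inradius - n := by
  rw [← s.sum_height_sub_signedInfDist_div_height s.circumcenter_mem_affineSpan]
  simp_rw [sub_div, Finset.sum_sub_distrib, inradius_eq_inv_sum_inv_height, div_inv_eq_mul,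
    Finset.mul_sum, div_eq_mul_inv]

lemma circumradius_sub_div_height_nonneg (i : Fin (n + 1)) :
    0 ≤ (s.circumradius - (s.height i - s.signedInfDist i s.circumcenter)) / s.height i :=
  div_nonneg (sub_nonneg.2 (s.height_sub_signedInfDist_circumcenter_le_circumradius i))
    (s.height_pos i).le

theorem mul_inradius_le_circumradius : n * s.inradius ≤ s.circumradius := by
  rw [← le_div_iff₀ s.inradius_pos, ← sub_nonneg, ← sum_circumradius_sub_div_height]
  exact Finset.sum_nonneg fun i _ ↦ s.circumradius_sub_div_height_nonneg i

theorem circumradius_eq_mul_inradius_iff :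
    s.circumradius = n * s.inradius ↔
      ∀ i j k l, i ≠ j → k ≠ l →
        dist (s.points i) (s.points j) = dist (s.points k) (s.points l) := by
  rw [← div_eq_iff s.inradius_pos.ne', ← sub_eq_zero, ← sum_circumradius_sub_div_height,
    Finset.sum_eq_zero_iff_of_nonneg fun i _ ↦ s.circumradius_sub_div_height_nonneg i,
    forall_dist_eq_iff_forall_dist_eq_of_ne]
  simp only [Finset.mem_univ, forall_const]
  refine forall_congr' fun i ↦ ?_
  rw [div_eq_zero_iff, or_iff_left (s.height_pos i).ne', sub_eq_zero, eq_comm,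
    height_sub_signedInfDist_circumcenter_eq_circumradius_iff, circumcenter_mem_altitude_iff]

end EuclideanAffineSpace

section InnerProductSpace

variable {E : Type*} [NormedAddCommGroup E] [InnerProductSpace ℝ E] {n : ℕ} [NeZero n]
  (s : Simplex ℝ E n)

lemma signedInfDist_eq_infDist_of_mem_interior_convexHull {c : E}
    (hc : c ∈ interior (convexHull ℝ (Set.range s.points))) (i : Fin (n + 1)) :
    s.signedInfDist i c = Metric.infDist c (affineSpan ℝ (s.points '' {i}ᶜ)) := by
  have htop : affineSpan ℝ (Set.range s.points) = ⊤ :=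
    affineSpan_eq_top_of_nonempty_interior ⟨c, hc⟩
  let b : AffineBasis (Fin (n + 1)) ℝ E := ⟨s.points, s.independent, htop⟩
  have hpos : ∀ j, 0 < b.coord j c := by
    rwa [show Set.range s.points = Set.range b from rfl, b.interior_convexHull] at hc
  have hcomb : Finset.univ.affineCombination ℝ s.points (fun j ↦ b.coord j c) = c :=
    b.affineCombination_coord_eq_self c
  have hsigned_pos : 0 < s.signedInfDist i c := by
    rw [← hcomb, signedInfDist_affineCombination_eq_mul_height _ _ (b.sum_coord_apply_eq_one c)]
    exact mul_pos (hpos i) (s.height_pos i)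
  have habs := abs_signedInfDist_eq_dist_of_mem_affineSpan_range i (htop ▸ mem_top ℝ E c)
  simp_rw [orthogonalProjectionSpan, range_faceOpposite_points] at habs
  rw [← dist_orthogonalProjection_eq_infDist, ← habs, abs_of_pos hsigned_pos]

lemma inradius_eq_of_forall_infDist_eq {c : E} {r : ℝ}
    (hc : c ∈ interior (convexHull ℝ (Set.range s.points)))
    (hr : ∀ i, Metric.infDist c (affineSpan ℝ (s.points '' {i}ᶜ)) = r) : s.inradius = r := by
  have hsigned : ∀ i, s.signedInfDist i c = r := fun i ↦
    (s.signedInfDist_eq_infDist_of_mem_interior_convexHull hc i).trans (hr i)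
  have hincenter : c = s.incenter :=
    (s.exists_forall_signedInfDist_eq_iff_eq_incenter
      (affineSpan_eq_top_of_nonempty_interior ⟨c, hc⟩ ▸ mem_top ℝ E c)).1 ⟨r, hsigned⟩
  rw [← s.signedInfDist_incenter 0, ← hincenter, hsigned]

end InnerProductSpace

end Affine.Simplex

theorem tetrahedron_aspect_ratio_ge_one_general
    (s : Affine.Simplex ℝ (EuclideanSpace ℝ (Fin 3)) 3)
    (c : EuclideanSpace ℝ (Fin 3)) (r : ℝ)
    (hc : c ∈ interior (convexHull ℝ (Set.range s.points)))
    (htangent : ∀ i : Fin 4,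
      Metric.infDist c
        ((affineSpan ℝ (s.points '' {j | j ≠ i}) : AffineSubspace ℝ
            (EuclideanSpace ℝ (Fin 3))) : Set (EuclideanSpace ℝ (Fin 3))) = r) :
    1 ≤ s.circumradius / (3 * r) ∧
    (s.circumradius / (3 * r) = 1 ↔
      ∀ i j k l : Fin 4, i ≠ j → k ≠ l →
        dist (s.points i) (s.points j) = dist (s.points k) (s.points l)) := by
  obtain rfl : s.inradius = r := s.inradius_eq_of_forall_infDist_eq hc htangent
  have h3r : 0 < 3 * s.inradius := mul_pos three_pos s.inradius_pos
  constructor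
  · rw [one_le_div h3r]
    exact_mod_cast s.mul_inradius_le_circumradius
  · rw [div_eq_one_iff_eq h3r.ne', ← s.circumradius_eq_mul_inradius_iff]
    norm_cast

/-- Euler-type inequality for tetrahedra: for a nondegenerate tetrahedron `s`
in `ℝ³` with circumradius `R = s.circumradius` and inscribed sphere of center
`c` and radius `r` (tangent to all four faces, center inside the tetrahedron),
the normalized aspect ratio `α = R/(3r)` satisfies `α ≥ 1`, with equality iff
`s` is regular (all edges have equal length). -/
theorem tetrahedron_aspect_ratio_ge_one
    (s : Affine.Simplex ℝ (EuclideanSpace ℝ (Fin 3)) 3)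
    (c : EuclideanSpace ℝ (Fin 3)) (r : ℝ) (hr : 0 < r)
    (hc : c ∈ interior (convexHull ℝ (Set.range s.points)))
    (htangent : ∀ i : Fin 4,
      Metric.infDist c
        ((affineSpan ℝ (s.points '' {j | j ≠ i}) : AffineSubspace ℝ
            (EuclideanSpace ℝ (Fin 3))) : Set (EuclideanSpace ℝ (Fin 3))) = r) :
    1 ≤ s.circumradius / (3 * r) ∧
    (s.circumradius / (3 * r) = 1 ↔
      ∀ i j k l : Fin 4, i ≠ j → k ≠ l →
        dist (s.points i) (s.points j) = dist (s.points k) (s.points l)) :=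
  tetrahedron_aspect_ratio_ge_one_general s c r hc htangent
end
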